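/- Let G be a graph in standard Cohen–Macaulay very well-covered form on {x_1,…,x_n,y_1,…,y_n}, let G_1, G_2 be as defined, and let G_3 = G ∖ {x_i, y_i : x_i ∈ N[x_n] ∪ N[y_n]} (equivalently, the induced subgraph G_1 ∩ G_2). Set J_1 = x_{i_1}⋯x_{i_t}·y_n·I(G_1)^∨ and J_2 = x_{j_1}⋯x_{j_p}·x_n·I(G_2)^∨. Then in S = K[x_1,…,x_n,y_1,…,y_n] one has the ideal equality J_1 ∩ J_2 = x_{i_1}⋯x_{i_t}·x_{j_1}⋯x_{j_p}·x_n y_n·I(G_3)^∨. -/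

import Mathlib

/-- `C` is a vertex cover of the graph `G`. -/
def IsVertexCover {V : Type*} (G : SimpleGraph V) (C : Finset V) : Prop :=
  ∀ ⦃v w : V⦄, G.Adj v w → v ∈ C ∨ w ∈ C

/-- `C` is a minimal vertex cover of the graph `G`. -/
def IsMinVertexCover {V : Type*} (G : SimpleGraph V) (C : Finset V) : Prop :=
  IsVertexCover G C ∧ ∀ D ⊆ C, IsVertexCover G D → D = C

/-- `C` is an independent set of the graph `G`. -/
def IsIndepSet {V : Type*} (G : SimpleGraph V) (C : Finset V) : Prop :=
  ∀ ⦃v w : V⦄, v ∈ C → w ∈ C → ¬ G.Adj v w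

/-- `C` is a maximal independent set of the graph `G`. -/
def IsMaxIndepSet {V : Type*} (G : SimpleGraph V) (C : Finset V) : Prop :=
  IsIndepSet G C ∧ ∀ D, C ⊆ D → IsIndepSet G D → D = C

/-- A graph on the vertex set `{x_i, y_i : i ∈ ι}` (with `x_i = Sum.inl i` and
`y_i = Sum.inr i`) is in standard Cohen–Macaulay very well-covered form if it satisfies
conditions (i)–(v) of the Crupi–Rinaldo–Terai characterization. -/
def StdCMVWC {ι : Type*} [LinearOrder ι] [Fintype ι] (G : SimpleGraph (ι ⊕ ι)) : Prop :=
  IsMinVertexCover G (Finset.univ.image Sum.inl) ∧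
  IsMaxIndepSet G (Finset.univ.image Sum.inr) ∧
  (∀ i : ι, G.Adj (Sum.inl i) (Sum.inr i)) ∧
  (∀ i j : ι, G.Adj (Sum.inl i) (Sum.inr j) → i ≤ j) ∧
  (∀ i j : ι, G.Adj (Sum.inl i) (Sum.inr j) → ¬ G.Adj (Sum.inl i) (Sum.inl j)) ∧
  (∀ (i j k : ι) (z : ι ⊕ ι), (z = Sum.inl i ∨ z = Sum.inr i) →
    i ≠ j → j ≠ k → i ≠ k →
    G.Adj z (Sum.inl j) → G.Adj (Sum.inr j) (Sum.inl k) → G.Adj z (Sum.inl k))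


/-- The subgraph of `G` obtained by deleting all vertices outside `S` (together with
their incident edges), viewed as a graph on the same vertex set. -/
def restrictG {V : Type*} (G : SimpleGraph V) (S : Set V) : SimpleGraph V where
  Adj v w := G.Adj v w ∧ v ∈ S ∧ w ∈ S
  symm := ⟨fun v w (h : G.Adj v w ∧ v ∈ S ∧ w ∈ S) => ⟨h.1.symm, h.2.2, h.2.1⟩⟩
  loopless := ⟨fun v (h : G.Adj v v ∧ v ∈ S ∧ v ∈ S) => G.irrefl h.1⟩

/-- The vertex `x_n`. -/
def xnV (n : ℕ) : Fin (n + 1) ⊕ Fin (n + 1) := Sum.inl (Fin.last n)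

/-- The vertex `y_n`. -/
def ynV (n : ℕ) : Fin (n + 1) ⊕ Fin (n + 1) := Sum.inr (Fin.last n)

/-- The indices `i` with `x_i ∈ N(x_n)`, i.e. `N(x_n) ∖ {y_n} = {x_{i_1},…,x_{i_t}}`. -/
def nbrX (n : ℕ) (G : SimpleGraph (Fin (n + 1) ⊕ Fin (n + 1))) [DecidableRel G.Adj] :
    Finset (Fin (n + 1)) :=
  Finset.univ.filter fun i => G.Adj (Sum.inl i) (xnV n)

/-- The indices `i` with `x_i ∈ N(y_n)`, i.e. `N(y_n) ∖ {x_n} = {x_{j_1},…,x_{j_p}}`. -/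
def nbrY (n : ℕ) (G : SimpleGraph (Fin (n + 1) ⊕ Fin (n + 1))) [DecidableRel G.Adj] :
    Finset (Fin (n + 1)) :=
  Finset.univ.filter fun i => G.Adj (Sum.inl i) (ynV n)

/-- `G_1 = G ∖ {x_{i_1},y_{i_1},…,x_{i_t},y_{i_t},x_n,y_n}`. -/
def G₁ (n : ℕ) (G : SimpleGraph (Fin (n + 1) ⊕ Fin (n + 1))) [DecidableRel G.Adj] :
    SimpleGraph (Fin (n + 1) ⊕ Fin (n + 1)) :=
  restrictG G {v | Sum.elim id id v ∉ nbrX n G ∧ Sum.elim id id v ≠ Fin.last n}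

/-- `G_2 = G ∖ {x_{j_1},y_{j_1},…,x_{j_p},y_{j_p},x_n,y_n}`. -/
def G₂ (n : ℕ) (G : SimpleGraph (Fin (n + 1) ⊕ Fin (n + 1))) [DecidableRel G.Adj] :
    SimpleGraph (Fin (n + 1) ⊕ Fin (n + 1)) :=
  restrictG G {v | Sum.elim id id v ∉ nbrY n G ∧ Sum.elim id id v ≠ Fin.last n}

/-- `G_3 = G ∖ {x_i, y_i : x_i ∈ N[x_n] ∪ N[y_n]}`, the induced subgraph `G_1 ∩ G_2`. -/
def G₃ (n : ℕ) (G : SimpleGraph (Fin (n + 1) ⊕ Fin (n + 1))) [DecidableRel G.Adj] :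
    SimpleGraph (Fin (n + 1) ⊕ Fin (n + 1)) :=
  restrictG G {v | Sum.elim id id v ∉ nbrX n G ∧ Sum.elim id id v ∉ nbrY n G ∧
    Sum.elim id id v ≠ Fin.last n}

open MvPolynomial

/-- The set of minimal monomial generators of the cover ideal of `G`: the monomials
`∏_{v ∈ C} v` where `C` runs over the minimal vertex covers of `G`. -/
def genSet {V : Type*} (K : Type*) [Field K] (G : SimpleGraph V) :
    Set (MvPolynomial V K) :=
  {m | ∃ C : Finset V, IsMinVertexCover G C ∧ m = ∏ v ∈ C, X v}

/-- The cover ideal `I(G)^∨` of `G`, the Alexander dual of the edge ideal. -/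
noncomputable def coverIdeal {V : Type*} (K : Type*) [Field K] (G : SimpleGraph V) :
    Ideal (MvPolynomial V K) :=
  Ideal.span (genSet K G)

/-- The monomial `x_{i_1}⋯x_{i_t}·y_n`. -/
noncomputable def mX (n : ℕ) (G : SimpleGraph (Fin (n + 1) ⊕ Fin (n + 1)))
    [DecidableRel G.Adj] (K : Type*) [Field K] :
    MvPolynomial (Fin (n + 1) ⊕ Fin (n + 1)) K :=
  (∏ i ∈ nbrX n G, X (Sum.inl i)) * X (ynV n)

/-- The monomial `x_{j_1}⋯x_{j_p}·x_n`. -/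
noncomputable def mY (n : ℕ) (G : SimpleGraph (Fin (n + 1) ⊕ Fin (n + 1)))
    [DecidableRel G.Adj] (K : Type*) [Field K] :
    MvPolynomial (Fin (n + 1) ⊕ Fin (n + 1)) K :=
  (∏ j ∈ nbrY n G, X (Sum.inl j)) * X (xnV n)

/-!
Both sides are monomial ideals, so membership is decided exponent by exponent: a monomial lies
in `J₁ ∩ J₂` iff it is divisible by `x_A y_n u₁` and by `x_B x_n u₂` for vertex covers `u₁` of
`G₁` and `u₂` of `G₂` (here `A = nbrX`, `B = nbrY`). The prefactors `x_A y_n` and `x_B x_n` have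
disjoint supports and `x_B x_n` involves no vertex of `G₃`, so the part of `u₁` inside `G₃` is a
cover of `G₃` giving the required divisibility. Conversely, a cover `C` of `G₃` extends to the
covers `C ∪ x_B` of `G₁` and `C ∪ x_A` of `G₂`: by condition (v), applied with `z = y_n` and
`z = x_n`, an edge `y_j x_k` with `x_j` adjacent to `z` forces `x_k` adjacent to `z`, so every
edge of `G₁` not in `G₃` meets `x_B`, and every edge of `G₂` not in `G₃` meets `x_A`.
-/

open Sum Pointwise

section SquarefreeExponent

variable {σ : Type*}

noncomputable def squarefreeExponent (C : Finset σ) : σ →₀ ℕ :=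
  ∑ v ∈ C, Finsupp.single v 1

theorem squarefreeExponent_apply [DecidableEq σ] (C : Finset σ) (v : σ) :
    squarefreeExponent C v = if v ∈ C then 1 else 0 := by
  simp [squarefreeExponent, Finsupp.finsetSum_apply, Finsupp.single_apply]

theorem squarefreeExponent_mono {C D : Finset σ} (h : C ⊆ D) :
    squarefreeExponent C ≤ squarefreeExponent D := by
  classical
  intro v
  by_cases hv : v ∈ C
  · simp [squarefreeExponent_apply, hv, h hv]
  · simp [squarefreeExponent_apply, hv]

theorem squarefreeExponent_union_le [DecidableEq σ] (C D : Finset σ) :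
    squarefreeExponent (C ∪ D) ≤ squarefreeExponent C + squarefreeExponent D := by
  intro v
  simp only [Finsupp.add_apply, squarefreeExponent_apply, Finset.mem_union]
  split_ifs <;> simp_all

theorem add_squarefreeExponent_union_le [DecidableEq σ] {a b : σ →₀ ℕ} {C D : Finset σ}
    (hD : squarefreeExponent D ≤ b) :
    a + squarefreeExponent (C ∪ D) ≤ a + b + squarefreeExponent C :=
  calc a + squarefreeExponent (C ∪ D)
      ≤ a + (squarefreeExponent C + b) := by
        gcongr
        exact (squarefreeExponent_union_le C D).trans (by gcongr)
    _ = a + b + squarefreeExponent C := by abel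

/-- Off `W`, the disjointness of the supports makes `a + b` equal to `a ⊔ b`. -/
theorem add_add_squarefreeExponent_filter_le_sup {a b : σ →₀ ℕ} {W : Set σ}
    [DecidablePred (· ∈ W)] (C : Finset σ) (hb : ∀ v ∈ W, b v = 0)
    (hab : ∀ v, a v = 0 ∨ b v = 0) :
    a + b + squarefreeExponent (C.filter (· ∈ W)) ≤ (a + squarefreeExponent C) ⊔ b := by
  classical
  intro v
  simp only [Finsupp.add_apply, Finsupp.sup_apply, squarefreeExponent_apply, Finset.mem_filter]
  by_cases hv : v ∈ W
  · simp [hv, hb v hv]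
  · rcases hab v with h | h <;> simp [hv, h]

theorem prod_X_eq_monomial_squarefreeExponent {R : Type*} [CommSemiring R] (C : Finset σ) :
    ∏ v ∈ C, (X v : MvPolynomial σ R) = monomial (squarefreeExponent C) 1 :=
  (monomial_sum_one C _).symm

end SquarefreeExponent

section VertexCover

variable {V : Type*} {G H : SimpleGraph V}

theorem IsVertexCover.exists_isMinVertexCover_subset {C : Finset V} (h : IsVertexCover G C) :
    ∃ D ⊆ C, IsMinVertexCover G D := by
  classical
  induction C using Finset.strongInduction with
  | H C ih =>
    by_cases hmin : ∀ D ⊆ C, IsVertexCover G D → D = C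
    · exact ⟨C, subset_rfl, h, hmin⟩
    · push Not at hmin
      obtain ⟨D, hDC, hD, hne⟩ := hmin
      obtain ⟨E, hED, hE⟩ := ih D (Finset.ssubset_iff_subset_ne.mpr ⟨hDC, hne⟩) hD
      exact ⟨E, hED.trans hDC, hE⟩

theorem IsVertexCover.union_of_adj [DecidableEq V] {C D : Finset V} (hC : IsVertexCover H C)
    (h : ∀ ⦃v w⦄, G.Adj v w → H.Adj v w ∨ v ∈ D ∨ w ∈ D) : IsVertexCover G (C ∪ D) := by
  intro v w hvw
  rcases h hvw with hH | hv | hw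
  · exact (hC hH).imp (Finset.mem_union_left D) (Finset.mem_union_left D)
  · exact Or.inl (Finset.mem_union_right C hv)
  · exact Or.inr (Finset.mem_union_right C hw)

theorem IsVertexCover.restrictG_filter {S T : Set V} [DecidablePred (· ∈ T)] {C : Finset V}
    (hC : IsVertexCover (restrictG G S) C) (hTS : T ⊆ S) :
    IsVertexCover (restrictG G T) (C.filter (· ∈ T)) := by
  rintro v w ⟨hvw, hv, hw⟩
  rcases hC ⟨hvw, hTS hv, hTS hw⟩ with h | h
  · exact Or.inl (Finset.mem_filter.mpr ⟨h, hv⟩)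
  · exact Or.inr (Finset.mem_filter.mpr ⟨h, hw⟩)

theorem mem_span_monomial_mul_coverIdeal_iff {K : Type*} [Field K] (G : SimpleGraph V)
    (a : V →₀ ℕ) (p : MvPolynomial V K) :
    p ∈ Ideal.span {monomial a 1} * coverIdeal K G ↔
      ∀ m ∈ p.support, ∃ C, IsVertexCover G C ∧ a + squarefreeExponent C ≤ m := by
  have hprod (C : Finset V) :
      monomial a 1 * ∏ v ∈ C, X v = monomial (a + squarefreeExponent C) (1 : K) := by
    rw [prod_X_eq_monomial_squarefreeExponent, monomial_mul, one_mul]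
  have hgen : ({monomial a 1} : Set (MvPolynomial V K)) * genSet K G =
      (fun s => monomial s (1 : K)) ''
        {s | ∃ C, IsMinVertexCover G C ∧ s = a + squarefreeExponent C} := by
    ext q
    simp only [Set.singleton_mul, genSet, Set.mem_image, Set.mem_ofPred_eq]
    constructor <;> rintro ⟨_, ⟨C, hC, rfl⟩, rfl⟩ <;> exact ⟨_, ⟨C, hC, rfl⟩, by rw [hprod]⟩
  rw [coverIdeal, Ideal.span_mul_span', hgen, mem_ideal_span_monomial_image]
  refine forall₂_congr fun m _ => ⟨?_, ?_⟩
  · rintro ⟨_, ⟨C, hC, rfl⟩, hle⟩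
    exact ⟨C, hC.1, hle⟩
  · rintro ⟨C, hC, hle⟩
    obtain ⟨D, hDC, hD⟩ := hC.exists_isMinVertexCover_subset
    exact ⟨_, ⟨D, hD, rfl⟩, le_trans (by gcongr; exact squarefreeExponent_mono hDC) hle⟩

end VertexCover

namespace StdCMVWC

variable {ι : Type*} [LinearOrder ι] [Fintype ι] {G : SimpleGraph (ι ⊕ ι)}

theorem not_adj_inr_inr (hG : StdCMVWC G) (j k : ι) : ¬ G.Adj (inr j) (inr k) :=
  hG.2.1.1 (by simp) (by simp)

theorem adj_inl_of_adj_inr_inl (hG : StdCMVWC G) {ℓ j k : ι} {z : ι ⊕ ι}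
    (hz : z = inl ℓ ∨ z = inr ℓ) (hj : j ≠ ℓ) (hk : k ≠ ℓ) (hzj : G.Adj z (inl j))
    (hjk : G.Adj (inr j) (inl k)) : G.Adj z (inl k) := by
  obtain rfl | hjk' := eq_or_ne j k
  · exact hzj
  · exact hG.2.2.2.2.2 ℓ j k z hz hj.symm hjk' hk.symm hzj hjk

/-- By condition (v), the `x`-neighbours `N` of `z ∈ {x_ℓ, y_ℓ}` are closed under edges `y_j x_k`
avoiding `ℓ`. -/
theorem mem_image_inl_of_adj (hG : StdCMVWC G) {N : Finset ι} {ℓ : ι} {z : ι ⊕ ι}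
    (hz : z = inl ℓ ∨ z = inr ℓ) (hN : ∀ j, j ∈ N ↔ G.Adj z (inl j)) {v w : ι ⊕ ι}
    (hvw : G.Adj v w) (hv : Sum.elim id id v ∈ N) (hvℓ : Sum.elim id id v ≠ ℓ)
    (hwℓ : Sum.elim id id w ≠ ℓ) : v ∈ N.image inl ∨ w ∈ N.image inl := by
  rcases v with j | j
  · exact Or.inl (Finset.mem_image_of_mem _ hv)
  rcases w with k | k
  · exact Or.inr <| Finset.mem_image_of_mem _ <|
      (hN k).2 (hG.adj_inl_of_adj_inr_inl hz hvℓ hwℓ ((hN j).1 hv) hvw)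
  · exact absurd hvw (hG.not_adj_inr_inr j k)

end StdCMVWC

section LastVertex

variable {n : ℕ} {G : SimpleGraph (Fin (n + 1) ⊕ Fin (n + 1))} [DecidableRel G.Adj]

theorem mem_nbrX {i : Fin (n + 1)} : i ∈ nbrX n G ↔ G.Adj (xnV n) (inl i) := by
  simp [nbrX, G.adj_comm]

theorem mem_nbrY {i : Fin (n + 1)} : i ∈ nbrY n G ↔ G.Adj (ynV n) (inl i) := by
  simp [nbrY, G.adj_comm]

theorem last_notMem_nbrX : Fin.last n ∉ nbrX n G := fun h => G.irrefl (mem_nbrX.1 h)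

theorem notMem_nbrX_of_mem_nbrY (hG : StdCMVWC G) {i : Fin (n + 1)} (hi : i ∈ nbrY n G) :
    i ∉ nbrX n G := fun hi' =>
  hG.2.2.2.2.1 i (Fin.last n) (mem_nbrY.1 hi).symm (mem_nbrX.1 hi').symm

theorem G₁_adj_cases (hG : StdCMVWC G) ⦃v w : Fin (n + 1) ⊕ Fin (n + 1)⦄
    (h : (G₁ n G).Adj v w) :
    (G₃ n G).Adj v w ∨ v ∈ (nbrY n G).image inl ∨ w ∈ (nbrY n G).image inl := by
  obtain ⟨hvw, ⟨hvX, hvl⟩, hwX, hwl⟩ := h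
  have hz : ynV n = inl (Fin.last n) ∨ ynV n = inr (Fin.last n) := Or.inr rfl
  by_cases hv : Sum.elim id id v ∈ nbrY n G
  · exact Or.inr (hG.mem_image_inl_of_adj hz (fun _ => mem_nbrY) hvw hv hvl hwl)
  by_cases hw : Sum.elim id id w ∈ nbrY n G
  · exact Or.inr (hG.mem_image_inl_of_adj hz (fun _ => mem_nbrY) hvw.symm hw hwl hvl).symm
  exact Or.inl ⟨hvw, ⟨hvX, hv, hvl⟩, hwX, hw, hwl⟩

theorem G₂_adj_cases (hG : StdCMVWC G) ⦃v w : Fin (n + 1) ⊕ Fin (n + 1)⦄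
    (h : (G₂ n G).Adj v w) :
    (G₃ n G).Adj v w ∨ v ∈ (nbrX n G).image inl ∨ w ∈ (nbrX n G).image inl := by
  obtain ⟨hvw, ⟨hvY, hvl⟩, hwY, hwl⟩ := h
  have hz : xnV n = inl (Fin.last n) ∨ xnV n = inr (Fin.last n) := Or.inl rfl
  by_cases hv : Sum.elim id id v ∈ nbrX n G
  · exact Or.inr (hG.mem_image_inl_of_adj hz (fun _ => mem_nbrX) hvw hv hvl hwl)
  by_cases hw : Sum.elim id id w ∈ nbrX n G
  · exact Or.inr (hG.mem_image_inl_of_adj hz (fun _ => mem_nbrX) hvw.symm hw hwl hvl).symm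
  exact Or.inl ⟨hvw, ⟨hv, hvY, hvl⟩, hw, hwY, hwl⟩

variable (n G)

noncomputable def expMX : (Fin (n + 1) ⊕ Fin (n + 1)) →₀ ℕ :=
  squarefreeExponent ((nbrX n G).image inl) + Finsupp.single (ynV n) 1

noncomputable def expMY : (Fin (n + 1) ⊕ Fin (n + 1)) →₀ ℕ :=
  squarefreeExponent ((nbrY n G).image inl) + Finsupp.single (xnV n) 1

theorem prod_X_inl_eq_monomial (K : Type*) [Field K] (N : Finset (Fin (n + 1))) :
    ∏ i ∈ N, (X (inl i) : MvPolynomial (Fin (n + 1) ⊕ Fin (n + 1)) K) =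
      monomial (squarefreeExponent (N.image inl)) 1 := by
  rw [← prod_X_eq_monomial_squarefreeExponent, Finset.prod_image inl_injective.injOn]

theorem mX_eq_monomial (K : Type*) [Field K] : mX n G K = monomial (expMX n G) 1 := by
  rw [mX, prod_X_inl_eq_monomial, ynV, X, monomial_mul, one_mul, expMX, ynV]

theorem mY_eq_monomial (K : Type*) [Field K] : mY n G K = monomial (expMY n G) 1 := by
  rw [mY, prod_X_inl_eq_monomial, xnV, X, monomial_mul, one_mul, expMY, xnV]

theorem prod_mul_X_mul_X_eq_monomial (K : Type*) [Field K] :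
    (∏ i ∈ nbrX n G, X (inl i)) * (∏ j ∈ nbrY n G, X (inl j)) * X (xnV n) * X (ynV n) =
      (monomial (expMX n G + expMY n G) 1 : MvPolynomial (Fin (n + 1) ⊕ Fin (n + 1)) K) := by
  have h := congrArg₂ (· * ·) (mX_eq_monomial n G K) (mY_eq_monomial n G K)
  simp only [monomial_mul, one_mul] at h
  rw [← h, mX, mY]
  ring

variable {n G}

theorem expMY_eq_zero {v : Fin (n + 1) ⊕ Fin (n + 1)} (hv : Sum.elim id id v ∉ nbrY n G)
    (hvl : Sum.elim id id v ≠ Fin.last n) : expMY n G v = 0 := by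
  have hv' : v ∉ (nbrY n G).image inl := by
    rintro hmem
    obtain ⟨j, hj, rfl⟩ := Finset.mem_image.1 hmem
    exact hv hj
  have hx : xnV n ≠ v := by rintro rfl; exact hvl rfl
  simp [expMY, squarefreeExponent_apply, hv', hx]

theorem expMX_eq_zero_or_expMY_eq_zero (hG : StdCMVWC G) (v : Fin (n + 1) ⊕ Fin (n + 1)) :
    expMX n G v = 0 ∨ expMY n G v = 0 := by
  rcases v with i | i
  · by_cases hi : i ∈ nbrX n G
    · refine Or.inr (expMY_eq_zero (fun hi' => notMem_nbrX_of_mem_nbrY hG hi' hi) ?_)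
      rintro rfl
      exact last_notMem_nbrX hi
    · left
      simp [expMX, squarefreeExponent_apply, hi, ynV]
  · right
    simp [expMY, squarefreeExponent_apply, xnV]

theorem exists_G₃_cover (hG : StdCMVWC G) {m : (Fin (n + 1) ⊕ Fin (n + 1)) →₀ ℕ}
    (h₁ : ∃ C, IsVertexCover (G₁ n G) C ∧ expMX n G + squarefreeExponent C ≤ m)
    (h₂ : ∃ C, IsVertexCover (G₂ n G) C ∧ expMY n G + squarefreeExponent C ≤ m) :
    ∃ C, IsVertexCover (G₃ n G) C ∧ expMX n G + expMY n G + squarefreeExponent C ≤ m := by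
  classical
  obtain ⟨C₁, hC₁, hle₁⟩ := h₁
  obtain ⟨C₂, -, hle₂⟩ := h₂
  let W : Set (Fin (n + 1) ⊕ Fin (n + 1)) := {v | Sum.elim id id v ∉ nbrX n G ∧
    Sum.elim id id v ∉ nbrY n G ∧ Sum.elim id id v ≠ Fin.last n}
  refine ⟨C₁.filter (· ∈ W), hC₁.restrictG_filter fun v hv => ⟨hv.1, hv.2.2⟩, ?_⟩
  calc _ ≤ (expMX n G + squarefreeExponent C₁) ⊔ expMY n G :=
        add_add_squarefreeExponent_filter_le_sup C₁ (fun v hv => expMY_eq_zero hv.2.1 hv.2.2)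
          (expMX_eq_zero_or_expMY_eq_zero hG)
    _ ≤ m := sup_le hle₁ (le_self_add.trans hle₂)

theorem exists_G₁_cover (hG : StdCMVWC G) {m : (Fin (n + 1) ⊕ Fin (n + 1)) →₀ ℕ}
    (h : ∃ C, IsVertexCover (G₃ n G) C ∧ expMX n G + expMY n G + squarefreeExponent C ≤ m) :
    ∃ C, IsVertexCover (G₁ n G) C ∧ expMX n G + squarefreeExponent C ≤ m := by
  obtain ⟨C, hC, hle⟩ := h
  exact ⟨_, hC.union_of_adj (G₁_adj_cases hG),
    (add_squarefreeExponent_union_le le_self_add).trans hle⟩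

theorem exists_G₂_cover (hG : StdCMVWC G) {m : (Fin (n + 1) ⊕ Fin (n + 1)) →₀ ℕ}
    (h : ∃ C, IsVertexCover (G₃ n G) C ∧ expMX n G + expMY n G + squarefreeExponent C ≤ m) :
    ∃ C, IsVertexCover (G₂ n G) C ∧ expMY n G + squarefreeExponent C ≤ m := by
  obtain ⟨C, hC, hle⟩ := h
  refine ⟨_, hC.union_of_adj (G₂_adj_cases hG), ?_⟩
  rw [add_comm (expMX n G)] at hle
  exact (add_squarefreeExponent_union_le le_self_add).trans hle

end LastVertex

/-- `J_1 ∩ J_2 = x_{i_1}⋯x_{i_t}·x_{j_1}⋯x_{j_p}·x_n y_n·I(G_3)^∨`, where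
`J_1 = x_{i_1}⋯x_{i_t}·y_n·I(G_1)^∨` and `J_2 = x_{j_1}⋯x_{j_p}·x_n·I(G_2)^∨`. -/
theorem stmt6 (n : ℕ) (K : Type*) [Field K]
    (G : SimpleGraph (Fin (n + 1) ⊕ Fin (n + 1))) [DecidableRel G.Adj]
    (hG : StdCMVWC G) :
    (Ideal.span {mX n G K} * coverIdeal K (G₁ n G)) ⊓
      (Ideal.span {mY n G K} * coverIdeal K (G₂ n G)) =
    Ideal.span {(∏ i ∈ nbrX n G, X (Sum.inl i)) * (∏ j ∈ nbrY n G, X (Sum.inl j)) *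
        X (xnV n) * X (ynV n)} *
      coverIdeal K (G₃ n G) := by
  ext p
  rw [Submodule.mem_inf, mX_eq_monomial, mY_eq_monomial, prod_mul_X_mul_X_eq_monomial,
    mem_span_monomial_mul_coverIdeal_iff, mem_span_monomial_mul_coverIdeal_iff,
    mem_span_monomial_mul_coverIdeal_iff]
  exact ⟨fun ⟨h₁, h₂⟩ m hm => exists_G₃_cover hG (h₁ m hm) (h₂ m hm),
    fun h => ⟨fun m hm => exists_G₁_cover hG (h m hm), fun m hm => exists_G₂_cover hG (h m hm)⟩⟩
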